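/- For 1 ≤ k < m and m ≤ t < n, the map sending τ = (τ_0,...,τ_{k-1}, τ_k, ..., τ_{m-1}, n) to τ' = (τ_0,...,τ_{k-1}, τ_k - 1, ..., τ_{m-1} - 1, n) is a bijection from {τ ∈ T(k,t) : τ_{k-1} ≠ b(k-1,t)} onto T(k, t-1). -/

import Mathlib

open Fin.NatCast

/-- Changepoint sequences: strictly increasing `τ_0 = 0 < τ_1 < ... < τ_m = n`. -/
def CP (n m : ℕ) : Set (Fin (m + 1) → ℕ) :=
  {τ | StrictMono τ ∧ τ 0 = 0 ∧ τ (Fin.last m) = n}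

/-- `T n m k t`: changepoint sequences with `τ (m-1) = t` whose entries at
indices `k, k+1, ..., m-1` are consecutive. -/
def T (n m k t : ℕ) : Set (Fin (m + 1) → ℕ) :=
  {τ | τ ∈ CP n m ∧ τ ((m - 1 : ℕ) : Fin (m + 1)) = t ∧
    ∀ i : ℕ, k ≤ i → i + 1 < m →
      τ ((i + 1 : ℕ) : Fin (m + 1)) = τ ((i : ℕ) : Fin (m + 1)) + 1}

/-- `b m j t = t - ((m-1) - j)`. -/
def b (m j t : ℕ) : ℕ := t - ((m - 1) - j)

/-! On `T k t` the block of indices `k, …, m - 1` is rigid: `τ j = t - (m - 1 - j)` there. So the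
map lowers the block by one, its inverse raises it, and both preserve the block equations. The
only thing to check is strict monotonicity at the two edges of the block: lowering needs
`τ (k - 1) + 1 < τ k = b m k t`, which is exactly `τ (k - 1) ≠ b m (k - 1) t`, and raising
needs `σ (m - 1) + 1 < σ m`, i.e. `t < n`. -/

section Shift

variable {ι : Type*} (p : ι → Prop) [DecidablePred p]

def lowerOn (τ : ι → ℕ) (i : ι) : ℕ := if p i then τ i - 1 else τ i

def raiseOn (τ : ι → ℕ) (i : ι) : ℕ := if p i then τ i + 1 else τ i

variable {p}

lemma lowerOn_raiseOn (τ : ι → ℕ) : lowerOn p (raiseOn p τ) = τ := by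
  funext i
  by_cases h : p i <;> simp [lowerOn, raiseOn, h]

lemma raiseOn_lowerOn {τ : ι → ℕ} (hτ : ∀ i, p i → τ i ≠ 0) :
    raiseOn p (lowerOn p τ) = τ := by
  funext i
  by_cases h : p i
  · simp only [raiseOn, lowerOn, if_pos h]
    exact Nat.sub_add_cancel (Nat.one_le_iff_ne_zero.2 (hτ i h))
  · simp [raiseOn, lowerOn, h]

end Shift

section StrictMono

variable {m : ℕ} {p : Fin (m + 1) → Prop} [DecidablePred p] {τ : Fin (m + 1) → ℕ}

lemma strictMono_lowerOn (hτ : StrictMono τ) (hpos : ∀ i, p i → τ i ≠ 0)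
    (hgap : ∀ i : Fin m, ¬ p i.castSucc → p i.succ → τ i.castSucc + 1 < τ i.succ) :
    StrictMono (lowerOn p τ) := by
  refine Fin.strictMono_iff_lt_succ.2 fun i => ?_
  have hlt := hτ i.castSucc_lt_succ
  by_cases hc : p i.castSucc <;> by_cases hs : p i.succ
  · have := hpos _ hc
    simp only [lowerOn, if_pos hc, if_pos hs]
    omega
  · simp only [lowerOn, if_pos hc, if_neg hs]
    omega
  · have := hgap i hc hs
    simp only [lowerOn, if_neg hc, if_pos hs]
    omega
  · simpa only [lowerOn, if_neg hc, if_neg hs] using hlt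

lemma strictMono_raiseOn (hτ : StrictMono τ)
    (hgap : ∀ i : Fin m, p i.castSucc → ¬ p i.succ → τ i.castSucc + 1 < τ i.succ) :
    StrictMono (raiseOn p τ) := by
  refine Fin.strictMono_iff_lt_succ.2 fun i => ?_
  have hlt := hτ i.castSucc_lt_succ
  by_cases hc : p i.castSucc <;> by_cases hs : p i.succ
  · simp only [raiseOn, if_pos hc, if_pos hs]
    omega
  · simpa only [raiseOn, if_pos hc, if_neg hs] using hgap i hc hs
  · simp only [raiseOn, if_neg hc, if_pos hs]
    omega
  · simpa only [raiseOn, if_neg hc, if_neg hs] using hlt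

end StrictMono

lemma add_sub_eq_iff_succ_eq {f : ℕ → ℕ} {k m t : ℕ} (hkm : k < m) :
    (f (m - 1) = t ∧ ∀ i, k ≤ i → i + 1 < m → f (i + 1) = f i + 1) ↔
      ∀ j, k ≤ j → j < m → f j + (m - 1 - j) = t := by
  constructor
  · rintro ⟨hlast, hstep⟩
    have hdist : ∀ d, d ≤ m - 1 - k → f (m - 1 - d) + d = t := by
      intro d hd
      induction d with
      | zero => simpa using hlast
      | succ d ih =>
        have := hstep (m - 1 - (d + 1)) (by omega) (by omega)
        rw [show m - 1 - (d + 1) + 1 = m - 1 - d by omega] at this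
        have := ih (by omega)
        omega
    intro j hkj hjm
    simpa [show m - 1 - (m - 1 - j) = j by omega] using hdist (m - 1 - j) (by omega)
  · intro h
    refine ⟨by simpa using h (m - 1) (by omega) (by omega), fun i hki him => ?_⟩
    have := h i hki (by omega)
    have := h (i + 1) (by omega) him
    omega

abbrev Block (k m : ℕ) (i : Fin (m + 1)) : Prop := k ≤ (i : ℕ) ∧ (i : ℕ) < m

section Changepoints

variable {n m k t : ℕ}

lemma Block.ne_zero (hk : 1 ≤ k) {i : Fin (m + 1)} (hi : Block k m i) : i ≠ 0 := by
  rintro rfl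
  exact absurd hi.1 (by simp; omega)

lemma ne_zero_of_mem_CP {τ : Fin (m + 1) → ℕ} (hτ : τ ∈ CP n m) {i : Fin (m + 1)}
    (hi : i ≠ 0) : τ i ≠ 0 := by
  have := hτ.1 (Fin.pos_iff_ne_zero.2 hi)
  rw [hτ.2.1] at this
  exact this.ne'

lemma mem_T_iff (hkm : k < m) {τ : Fin (m + 1) → ℕ} :
    τ ∈ T n m k t ↔ τ ∈ CP n m ∧ ∀ j, Block k m j → τ j + (m - 1 - j) = t := by
  refine and_congr_right fun _ => (add_sub_eq_iff_succ_eq (f := fun j : ℕ => τ j) hkm).trans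
    ⟨fun h j hj => by simpa using h j hj.1 hj.2, fun h j hkj hjm => ?_⟩
  have hj : ((j : Fin (m + 1)) : ℕ) = j := Fin.val_cast_of_lt (by omega)
  simpa [hj] using h j ⟨by omega, by omega⟩

lemma lowerOn_mem_T (hk : 1 ≤ k) (hkm : k < m) {τ : Fin (m + 1) → ℕ} (hτ : τ ∈ T n m k t)
    (hb : τ ((k - 1 : ℕ) : Fin (m + 1)) ≠ b m (k - 1) t) :
    lowerOn (Block k m) τ ∈ T n m k (t - 1) := by
  rw [mem_T_iff hkm] at hτ ⊢
  obtain ⟨hCP, hblock⟩ := hτ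
  have ⟨hmono, h0, hlast⟩ := hCP
  have hpos : ∀ i, Block k m i → τ i ≠ 0 := fun _ hi => ne_zero_of_mem_CP hCP (hi.ne_zero hk)
  have hgap : ∀ i : Fin m, ¬ Block k m i.castSucc → Block k m i.succ →
      τ i.castSucc + 1 < τ i.succ := by
    intro i hc hs
    have hik : (i : ℕ) + 1 = k := by
      simp only [Block, Fin.val_castSucc, Fin.val_succ] at hc hs; omega
    have hprev : i.castSucc = ((k - 1 : ℕ) : Fin (m + 1)) :=
      Fin.ext (by rw [Fin.val_cast_of_lt (by omega)]; simp; omega)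
    have hlt := hmono i.castSucc_lt_succ
    have hsucc := hblock _ hs
    rw [← hprev] at hb
    simp only [b, Fin.val_succ] at hb hsucc
    omega
  refine ⟨⟨strictMono_lowerOn hmono hpos hgap, ?_, ?_⟩, fun j hj => ?_⟩
  · simpa [lowerOn, Block, Nat.one_le_iff_ne_zero.1 hk] using h0
  · simpa [lowerOn, Block] using hlast
  · have := hblock j hj
    have := hpos j hj
    simp only [lowerOn, if_pos hj]
    omega

lemma raiseOn_mem_T (hk : 1 ≤ k) (hkm : k < m) (htn : t < n) {σ : Fin (m + 1) → ℕ}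
    (hσ : σ ∈ T n m k (t - 1)) :
    raiseOn (Block k m) σ ∈
      {τ ∈ T n m k t | τ ((k - 1 : ℕ) : Fin (m + 1)) ≠ b m (k - 1) t} := by
  rw [mem_T_iff hkm] at hσ
  obtain ⟨hCP, hblock⟩ := hσ
  have ⟨hmono, h0, hlast⟩ := hCP
  -- `t - 1` truncates, so `t = 0` has to be excluded first: `σ (m - 1) > σ 0 = 0`.
  let top : Fin (m + 1) := ⟨m - 1, by omega⟩
  have ht : 1 ≤ t := by
    have := hblock top ⟨by simp [top]; omega, by simp [top]; omega⟩
    have := ne_zero_of_mem_CP hCP (i := top) (Fin.ne_of_val_ne (by simp [top]; omega))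
    simp only [top] at *
    omega
  have hgap : ∀ i : Fin m, Block k m i.castSucc → ¬ Block k m i.succ →
      σ i.castSucc + 1 < σ i.succ := by
    intro i hc hs
    have him : (i : ℕ) + 1 = m := by
      simp only [Block, Fin.val_castSucc, Fin.val_succ] at hc hs; omega
    have := hblock _ hc
    rw [show i.succ = Fin.last m from Fin.ext (by simpa using him), hlast]
    simp only [Fin.val_castSucc] at this
    omega
  refine ⟨(mem_T_iff hkm).2
    ⟨⟨strictMono_raiseOn hmono hgap, ?_, ?_⟩, fun j hj => ?_⟩, ?_⟩
  · simpa [raiseOn, Block, Nat.one_le_iff_ne_zero.1 hk] using h0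
  · simpa [raiseOn, Block] using hlast
  · have := hblock j hj
    simp only [raiseOn, if_pos hj]
    omega
  · let first : Fin (m + 1) := ⟨k, by omega⟩
    have hprev : ((k - 1 : ℕ) : Fin (m + 1)) < first :=
      Fin.lt_def.2 (by rw [Fin.val_cast_of_lt (by omega)]; simp [first]; omega)
    have hlt := hmono hprev
    have hfirst := hblock first ⟨le_rfl, hkm⟩
    have hout : ¬ Block k m ((k - 1 : ℕ) : Fin (m + 1)) := by
      simp only [Block, Fin.val_cast_of_lt (show k - 1 < m + 1 by omega)]; omega
    simp only [raiseOn, if_neg hout, b, ne_eq]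
    simp only [first] at hlt hfirst
    omega

end Changepoints

theorem stmt8_general (n m k t : ℕ) (hk : 1 ≤ k) (hkm : k < m) (htn : t < n) :
    Set.BijOn
      (fun (τ : Fin (m + 1) → ℕ) (i : Fin (m + 1)) =>
        if k ≤ (i : ℕ) ∧ (i : ℕ) < m then τ i - 1 else τ i)
      {τ ∈ T n m k t | τ ((k - 1 : ℕ) : Fin (m + 1)) ≠ b m (k - 1) t}
      (T n m k (t - 1)) :=
  Set.InvOn.bijOn (f' := raiseOn (Block k m))
    ⟨fun _ hτ => raiseOn_lowerOn fun _ hi => ne_zero_of_mem_CP hτ.1.1 (hi.ne_zero hk),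
      fun σ _ => lowerOn_raiseOn σ⟩
    (fun _ hτ => lowerOn_mem_T hk hkm hτ.1 hτ.2)
    (fun _ hσ => raiseOn_mem_T hk hkm htn hσ)

/-- The map shifting the coordinates at indices `k, ..., m-1` down by one is a
bijection from `{τ ∈ T k t : τ (k-1) ≠ b (k-1) t}` onto `T k (t-1)`. -/
theorem stmt8 (n m k t : ℕ) (hk : 1 ≤ k) (hkm : k < m) (hmt : m ≤ t) (htn : t < n) :
    Set.BijOn
      (fun (τ : Fin (m + 1) → ℕ) (i : Fin (m + 1)) =>
        if k ≤ (i : ℕ) ∧ (i : ℕ) < m then τ i - 1 else τ i)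
      {τ ∈ T n m k t | τ ((k - 1 : ℕ) : Fin (m + 1)) ≠ b m (k - 1) t}
      (T n m k (t - 1)) :=
  stmt8_general n m k t hk hkm htn
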